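/- arXiv:1905.01412 — 2 statements merged into one kernel-verified Lean document; each statement's English description precedes it below -/
import Mathlib

section
/- Let q = 4k+1 be a prime power with k odd. In the group Z_2 × F_q, define S_1 = {(0,0),(1,0)}, S_2 = {0}×D^4_0 ∪ {1}×D^4_2, S_3 = {0}×D^4_1 ∪ {0}×D^4_3. Then {S_1,S_2,S_3} is an optimal (2q, 3, (2,2k,2k), 4k+2, 2k+1)-BSWEDF: every nonzero element of Z_2 × F_q appears at most 2k+1 times in ⋃_{i≠j} D(S_i, S̃_j), some element attains 2k+1, and 2k+1 = ⌈k̃·a·(m−1)/(n−1)⌉ with k̃ = 2k, a = 4k+2, m = 3, n = 2q. -/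
/-!
Write each block as two layers over `F`: `S₁ = {0}×{0} ∪ {1}×{0}`, `S₂ = {0}×D₀ ∪ {1}×D₂` and
`S₃ = {0}×N`, where `Q = D₀ ∪ D₂` and `N = D₁ ∪ D₃` are the nonzero squares and non-squares.
Let `δ = (ε, d)`. The differences with `S₁` contribute `[-d ∈ Q ∪ N]` once and `[d ∈ Q ∪ N]`
with weight `k`. The differences between `S₂` and `S₃` contribute
`#{a ∈ D₀ | a - d ∈ N} + #{a ∈ N | a - d ∈ D₀}` (with `D₂` for `D₀` if `ε = 1`). Since `k` is
odd, `-D₀ = D₂`, so `a ↦ d - a` turns the second term into `#{a ∈ D₂ | a - d ∈ N}`, and both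
cases give the cyclotomic number `#{a ∈ Q | a - d ∈ N}`. Because `-1` is a square this number is
symmetric in `Q` and `N`, and the Jacobi sum `∑ χ(a) χ(a - d) = -1` shows that the two together
count `(q - 1)/2` elements, so it equals `k`. Hence every `(ε, d)` with `d ≠ 0` occurs exactly
`2k + 1` times, and `(1, 0)` does not occur at all.
-/

/-- The multiset of external differences `{x - y : x ∈ X, y ∈ Y}` (with multiplicity). -/
def extDiff {G : Type*} [Sub G] (X Y : Multiset G) : Multiset G :=
  X.bind fun x => Y.map fun y => x - y

/-- The multiset `⋃_{i ≠ j} D(B_i, B̃_j)`, where the standard weighted multiset `B̃_j`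
repeats each element of `B_j` exactly `ktil / |B_j|` times. -/
def wtotal {G : Type*} [Sub G] {m : ℕ} (B : Fin m → Finset G) (ktil : ℕ) : Multiset G :=
  ∑ i : Fin m, ∑ j : Fin m,
    if i ≠ j then extDiff (B i).val ((ktil / (B j).card) • (B j).val) else 0

/-- The cyclotomic class of index 4: `D^4_i = {α^{i+4j} : 0 ≤ j ≤ k-1}`. -/
def cyc4 {F : Type*} [Field F] [DecidableEq F] (α : Fˣ) (k i : ℕ) : Finset F :=
  (Finset.range k).image fun j => (α : F) ^ (i + 4 * j)

open Finset
open scoped Pointwise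

section DiffRep

variable {G : Type*} [AddCommGroup G] [DecidableEq G] {A B C E : Finset G} {d : G}

def diffRep (A C : Finset G) (d : G) : ℕ := #{a ∈ A | a - d ∈ C}

lemma count_extDiff_nsmul (A C : Finset G) (n : ℕ) (d : G) :
    (extDiff A.val (n • C.val)).count d = n * diffRep A C d := by
  rw [extDiff, Multiset.count_bind, diffRep, card_filter, mul_sum, Finset.sum]
  congr 1
  refine Multiset.map_congr rfl fun a _ => ?_
  rw [← sub_sub_cancel a d, Multiset.count_map_eq_count' _ _ sub_right_injective, sub_sub_cancel,
    Multiset.count_nsmul, Multiset.count_eq_of_nodup C.nodup]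
  rfl

lemma count_wtotal {m : ℕ} (B : Fin m → Finset G) (ktil : ℕ) (d : G) :
    (wtotal B ktil).count d =
      ∑ i, ∑ j, if i ≠ j then ktil / #(B j) * diffRep (B i) (B j) d else 0 := by
  simp only [wtotal, Multiset.count_sum', apply_ite (Multiset.count d), count_extDiff_nsmul,
    Multiset.count_zero]

lemma count_wtotal_three {B₀ B₁ B₂ : Finset G} {k : ℕ} (hk : 0 < k) (h₀ : #B₀ = 2)
    (h₁ : #B₁ = 2 * k) (h₂ : #B₂ = 2 * k) (δ : G) :
    (wtotal ![B₀, B₁, B₂] (2 * k)).count δ =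
      diffRep B₀ B₁ δ + diffRep B₀ B₂ δ + k * (diffRep B₁ B₀ δ + diffRep B₂ B₀ δ) +
        (diffRep B₁ B₂ δ + diffRep B₂ B₁ δ) := by
  simp only [count_wtotal, Fin.sum_univ_three, Fin.isValue, Matrix.cons_val_zero,
    Matrix.cons_val_one, Matrix.cons_val, h₀, h₁, h₂, Nat.mul_div_cancel_left _ two_pos,
    Nat.div_self (by omega : 0 < 2 * k), ne_eq, not_true_eq_false, ↓reduceIte, Fin.reduceEq,
    not_false_eq_true, one_mul, zero_add, add_zero]
  ring

lemma diffRep_union_left (h : Disjoint A B) :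
    diffRep (A ∪ B) C d = diffRep A C d + diffRep B C d := by
  rw [diffRep, filter_union, card_union_of_disjoint (disjoint_filter_filter h)]
  rfl

lemma diffRep_union_right (h : Disjoint C E) :
    diffRep A (C ∪ E) d = diffRep A C d + diffRep A E d := by
  rw [diffRep, diffRep, diffRep, ← card_union_of_disjoint, ← filter_or]
  · simp only [mem_union]
  · exact disjoint_filter.2 fun _ _ hC hE => disjoint_left.1 h hC hE

@[simp] lemma diffRep_empty_left : diffRep ∅ C d = 0 := by simp [diffRep]

@[simp] lemma diffRep_empty_right : diffRep A ∅ d = 0 := by simp [diffRep]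

lemma diffRep_zero_left : diffRep {0} C d = if -d ∈ C then 1 else 0 := by
  rw [diffRep, filter_singleton, zero_sub]
  split_ifs <;> rfl

lemma diffRep_zero_right : diffRep A {0} d = if d ∈ A then 1 else 0 := by
  simp only [diffRep, mem_singleton, sub_eq_zero, filter_eq']
  split_ifs <;> rfl

lemma diffRep_zero_of_disjoint (h : Disjoint A C) : diffRep A C 0 = 0 := by
  simpa [diffRep, filter_mem_eq_inter, ← disjoint_iff_inter_eq_empty] using h

lemma diffRep_neg_swap : diffRep A C d = diffRep (-C) (-A) d := by
  refine card_nbij' (d - ·) (d - ·) (fun a ha => ?_) (fun b hb => ?_)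
    (fun a _ => sub_sub_cancel d a) (fun b _ => sub_sub_cancel d b)
  · simp_all [mem_neg']
  · simp_all [mem_neg']

end DiffRep

lemma ZMod.two_cases (ε : ZMod 2) : ε = 0 ∨ ε = 1 := by
  revert ε
  decide

section Layers

variable {G : Type*} [DecidableEq G] {A B : Finset G}

def layers (A B : Finset G) : Finset (ZMod 2 × G) :=
  A.image (fun x => ((0 : ZMod 2), x)) ∪ B.image (fun x => ((1 : ZMod 2), x))

lemma mem_layers {e : ZMod 2} {x : G} :
    (e, x) ∈ layers A B ↔ e = 0 ∧ x ∈ A ∨ e = 1 ∧ x ∈ B := by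
  simp [layers, and_comm, eq_comm]

lemma disjoint_image_zero_one :
    Disjoint (A.image fun x => ((0 : ZMod 2), x)) (B.image fun x => ((1 : ZMod 2), x)) := by
  simp [disjoint_left]

lemma card_layers : #(layers A B) = #A + #B := by
  rw [layers, card_union_of_disjoint disjoint_image_zero_one,
    card_image_of_injective _ (Prod.mk_right_injective _),
    card_image_of_injective _ (Prod.mk_right_injective _)]

variable [AddCommGroup G] {C E : Finset G} {d : G}

lemma diffRep_layers_left (Y : Finset (ZMod 2 × G)) (δ : ZMod 2 × G) :
    diffRep (layers A B) Y δ =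
      #{a ∈ A | ((0 : ZMod 2), a) - δ ∈ Y} + #{b ∈ B | ((1 : ZMod 2), b) - δ ∈ Y} := by
  rw [diffRep, layers, filter_union, card_union_of_disjoint
    (disjoint_filter_filter disjoint_image_zero_one), filter_image, filter_image,
    card_image_of_injective _ (Prod.mk_right_injective _),
    card_image_of_injective _ (Prod.mk_right_injective _)]

lemma diffRep_layers_zero :
    diffRep (layers A B) (layers C E) (0, d) = diffRep A C d + diffRep B E d := by
  rw [diffRep_layers_left]
  simp [mem_layers, diffRep]

lemma diffRep_layers_one :
    diffRep (layers A B) (layers C E) (1, d) = diffRep A E d + diffRep B C d := by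
  rw [diffRep_layers_left]
  simp [mem_layers, diffRep]

lemma diffRep_layers_self_left (h : Disjoint C E) (ε : ZMod 2) :
    diffRep (layers A A) (layers C E) (ε, d) = diffRep A (C ∪ E) d := by
  rw [diffRep_union_right h]
  rcases ZMod.two_cases ε with rfl | rfl
  · exact diffRep_layers_zero
  · exact diffRep_layers_one.trans (add_comm _ _)

lemma diffRep_layers_self_right (h : Disjoint A B) (ε : ZMod 2) :
    diffRep (layers A B) (layers C C) (ε, d) = diffRep (A ∪ B) C d := by
  rw [diffRep_union_left h]
  rcases ZMod.two_cases ε with rfl | rfl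
  · exact diffRep_layers_zero
  · exact diffRep_layers_one

end Layers

lemma ringChar_ne_two_of_card_mod_four {F : Type*} [Field F] [Fintype F]
    (hF : Fintype.card F % 4 = 1) : ringChar F ≠ 2 := by
  rw [Ne, FiniteField.even_card_iff_char_two]
  omega

section QuadraticChar

variable (F : Type*) [Field F] [Fintype F] [DecidableEq F]

def quadResidues : Finset F := {a | quadraticChar F a = 1}

def quadNonresidues : Finset F := {a | quadraticChar F a = -1}

variable {F}

lemma disjoint_quadResidues_quadNonresidues :
    Disjoint (quadResidues F) (quadNonresidues F) := by
  rw [quadResidues, quadNonresidues, disjoint_filter]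
  intro a _ h
  rw [h]
  decide

lemma quadResidues_union_quadNonresidues : quadResidues F ∪ quadNonresidues F = {0}ᶜ := by
  ext a
  simp only [quadResidues, quadNonresidues, mem_union, mem_filter, mem_univ, true_and, mem_compl,
    mem_singleton]
  exact ⟨by rintro h rfl; simp at h, quadraticChar_dichotomy⟩

lemma neg_quadResidues (h : quadraticChar F (-1) = 1) : -quadResidues F = quadResidues F := by
  ext a
  simp only [mem_neg', quadResidues, mem_filter, mem_univ, true_and]
  rw [neg_eq_neg_one_mul, map_mul, h, one_mul]

lemma neg_quadNonresidues (h : quadraticChar F (-1) = 1) :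
    -quadNonresidues F = quadNonresidues F := by
  ext a
  simp only [mem_neg', quadNonresidues, mem_filter, mem_univ, true_and]
  rw [neg_eq_neg_one_mul, map_mul, h, one_mul]

lemma quadraticChar_sum_mul_sub (hF : ringChar F ≠ 2) {d : F} (hd : d ≠ 0) :
    ∑ a, quadraticChar F a * quadraticChar F (a - d) = -1 := by
  have hJ := jacobiSum_nontrivial_inv (quadraticChar_ne_one hF)
  rw [(quadraticChar_isQuadratic F).inv] at hJ
  set χ := quadraticChar F
  calc ∑ a, χ a * χ (a - d) = ∑ x, χ (d * x) * χ (d * x - d) :=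
        (Fintype.sum_bijective _ (mulLeft_bijective₀ d hd) _ _ fun _ => rfl).symm
    _ = ∑ x, χ (-1) * (χ x * χ (1 - x)) := by
        refine sum_congr rfl fun x _ => ?_
        rw [show d * x - d = d * (-1) * (1 - x) by ring, map_mul, map_mul, map_mul]
        linear_combination (χ x * χ (-1) * χ (1 - x)) * quadraticChar_sq_one hd
    _ = -1 := by
        rw [← mul_sum, ← jacobiSum, hJ, mul_neg, ← sq,
          quadraticChar_sq_one (neg_ne_zero.2 one_ne_zero)]

lemma two_mul_card_quadraticChar_mul_sub_eq_neg_one (hF : ringChar F ≠ 2) {d : F}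
    (hd : d ≠ 0) :
    2 * #{a | quadraticChar F a * quadraticChar F (a - d) = -1} = Fintype.card F - 1 := by
  have hval : ∀ a, quadraticChar F a * quadraticChar F (a - d) =
      (if quadraticChar F a * quadraticChar F (a - d) ≠ 0 then 1 else 0) -
        2 * (if quadraticChar F a * quadraticChar F (a - d) = -1 then 1 else 0) := by
    intro a
    rcases quadraticChar_isQuadratic F a with h | h | h <;>
      rcases quadraticChar_isQuadratic F (a - d) with h' | h' | h' <;> simp [h, h']
  have hsupp : #{a | quadraticChar F a * quadraticChar F (a - d) ≠ 0} = Fintype.card F - 2 := by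
    rw [show ({a | quadraticChar F a * quadraticChar F (a - d) ≠ 0} : Finset F) = {0, d}ᶜ by
      ext a
      simp only [mem_filter, mem_univ, true_and, mem_compl, mem_insert, mem_singleton, ne_eq,
        mul_eq_zero, quadraticChar_eq_zero_iff, sub_eq_zero, not_or], card_compl, card_pair hd.symm]
  have hsum := quadraticChar_sum_mul_sub hF hd
  rw [sum_congr rfl fun a _ => hval a] at hsum
  rw [sum_sub_distrib, sum_boole, ← mul_sum, sum_boole, hsupp] at hsum
  omega

lemma diffRep_quadResidues_quadNonresidues_add_swap (d : F) :
    diffRep (quadResidues F) (quadNonresidues F) d +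
        diffRep (quadNonresidues F) (quadResidues F) d =
      #{a | quadraticChar F a * quadraticChar F (a - d) = -1} := by
  rw [diffRep, diffRep,
    ← card_union_of_disjoint (disjoint_filter_filter disjoint_quadResidues_quadNonresidues)]
  congr 1
  ext a
  simp [quadResidues, quadNonresidues, Int.mul_eq_neg_one_iff_eq_one_or_neg_one]

lemma quadraticChar_neg_one_of_card_mod_four (hF : Fintype.card F % 4 = 1) :
    quadraticChar F (-1) = 1 := by
  rw [quadraticChar_neg_one (ringChar_ne_two_of_card_mod_four hF), ZMod.χ₄_nat_one_mod_four hF]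

lemma four_mul_diffRep_quadResidues_quadNonresidues (hF : Fintype.card F % 4 = 1) {d : F}
    (hd : d ≠ 0) :
    4 * diffRep (quadResidues F) (quadNonresidues F) d = Fintype.card F - 1 := by
  have hneg := quadraticChar_neg_one_of_card_mod_four hF
  have hsymm : diffRep (quadNonresidues F) (quadResidues F) d =
      diffRep (quadResidues F) (quadNonresidues F) d := by
    rw [diffRep_neg_swap, neg_quadResidues hneg, neg_quadNonresidues hneg]
  rw [← two_mul_card_quadraticChar_mul_sub_eq_neg_one (ringChar_ne_two_of_card_mod_four hF) hd,
    ← diffRep_quadResidues_quadNonresidues_add_swap, hsymm]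
  ring

lemma diffRep_zero_left_quadResidues_add (d : F) :
    diffRep {0} (quadResidues F) d + diffRep {0} (quadNonresidues F) d =
      if d = 0 then 0 else 1 := by
  rw [← diffRep_union_right disjoint_quadResidues_quadNonresidues,
    quadResidues_union_quadNonresidues, diffRep_zero_left]
  simp

lemma diffRep_zero_right_quadResidues_add (d : F) :
    diffRep (quadResidues F) {0} d + diffRep (quadNonresidues F) {0} d =
      if d = 0 then 0 else 1 := by
  rw [← diffRep_union_left disjoint_quadResidues_quadNonresidues,
    quadResidues_union_quadNonresidues, diffRep_zero_right]
  simp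

end QuadraticChar

lemma coe_pow_eq_neg_one_of_orderOf_eq_two_mul {F : Type*} [Field F] [Fintype F] {m : ℕ}
    {α : Fˣ} (hα : orderOf α = 2 * m) : (α : F) ^ m = -1 := by
  have hm : 0 < m := by have := orderOf_pos α; omega
  have h := (IsPrimitiveRoot.coe_units_iff.2 (hα ▸ IsPrimitiveRoot.orderOf α)).pow_of_dvd
    hm.ne' (dvd_mul_left m 2)
  rw [Nat.mul_div_cancel _ hm] at h
  exact h.eq_neg_one_of_two_right

section Cyclotomic

variable {F : Type*} [Field F] [DecidableEq F] {k : ℕ} {α : Fˣ}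

lemma zero_notMem_cyc4 (i : ℕ) : (0 : F) ∉ cyc4 α k i := by
  simp [cyc4, ← Units.val_pow_eq_pow_val]

lemma card_cyc4 (hα : orderOf α = 4 * k) (i : ℕ) : #(cyc4 α k i) = k := by
  rw [cyc4, card_image_of_injOn, card_range]
  intro a ha b hb h
  simp only [coe_range, Set.mem_Iio] at ha hb
  dsimp only at h
  rw [← Units.val_pow_eq_pow_val, ← Units.val_pow_eq_pow_val, Units.val_inj, pow_eq_pow_iff_modEq,
    hα] at h
  have h4 := Nat.ModEq.add_left_cancel' i h
  rw [Nat.ModEq, Nat.mod_eq_of_lt (by omega), Nat.mod_eq_of_lt (by omega)] at h4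
  omega

variable [Fintype F]

lemma mem_cyc4_pow (hα : orderOf α = 4 * k) {i : ℕ} (hi : i < 4) (n : ℕ) :
    (α : F) ^ n ∈ cyc4 α k i ↔ n % 4 = i := by
  have hk : 0 < k := by have := orderOf_pos α; omega
  have hmod : ∀ m, m % (4 * k) % 4 = m % 4 := fun m => Nat.mod_mod_of_dvd m (dvd_mul_right 4 k)
  simp only [cyc4, mem_image, mem_range, ← Units.val_pow_eq_pow_val, Units.val_inj,
    pow_eq_pow_iff_modEq, hα, Nat.ModEq]
  constructor
  · rintro ⟨j, -, h⟩
    have := hmod (i + 4 * j)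
    rw [h, hmod] at this
    omega
  · intro h
    refine ⟨n % (4 * k) / 4, ?_, ?_⟩
    · have := Nat.mod_lt n (show 0 < 4 * k by omega)
      omega
    · have := hmod n
      rw [show i + 4 * (n % (4 * k) / 4) = n % (4 * k) by omega, Nat.mod_mod]

lemma disjoint_cyc4 (hα : orderOf α = 4 * k) {i i' : ℕ} (hi : i < 4) (hi' : i' < 4)
    (hne : i ≠ i') : Disjoint (cyc4 α k i) (cyc4 α k i') := by
  rw [disjoint_left]
  intro x hx hx'
  obtain ⟨j, -, rfl⟩ := mem_image.1 hx
  rw [mem_cyc4_pow hα hi'] at hx'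
  omega

lemma neg_mem_cyc4 (hα : orderOf α = 4 * k) (hk : Odd k) {i : ℕ} {x : F}
    (hx : x ∈ cyc4 α k i) : -x ∈ cyc4 α k ((i + 2) % 4) := by
  obtain ⟨j, -, rfl⟩ := mem_image.1 hx
  rw [← neg_one_mul, ← coe_pow_eq_neg_one_of_orderOf_eq_two_mul (m := 2 * k) (by rw [hα]; ring),
    ← pow_add,
    mem_cyc4_pow hα (Nat.mod_lt _ (by norm_num))]
  obtain ⟨m, rfl⟩ := hk
  omega

lemma neg_cyc4_zero (hα : orderOf α = 4 * k) (hk : Odd k) :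
    -cyc4 α k 0 = (cyc4 α k 2 : Finset F) := by
  ext x
  rw [mem_neg']
  constructor
  · intro h
    simpa using neg_mem_cyc4 hα hk h
  · exact neg_mem_cyc4 hα hk

lemma exists_pow_eq (hcard : Fintype.card F = 4 * k + 1) (hα : orderOf α = 4 * k)
    {x : F} (hx : x ≠ 0) : ∃ n : ℕ, (α : F) ^ n = x := by
  have htop : Subgroup.zpowers α = ⊤ := by
    refine Subgroup.eq_top_of_card_eq _ ?_
    rw [Nat.card_zpowers, hα, Nat.card_eq_fintype_card, Fintype.card_units, hcard,
      Nat.add_sub_cancel]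
  have hu : Units.mk0 x hx ∈ Submonoid.powers α := by
    rw [mem_powers_iff_mem_zpowers, htop]
    exact Subgroup.mem_top _
  obtain ⟨n, hn⟩ := hu
  exact ⟨n, by rw [← Units.val_pow_eq_pow_val]; exact congrArg Units.val hn⟩

lemma quadraticChar_coe_pow (hcard : Fintype.card F = 4 * k + 1) (hα : orderOf α = 4 * k)
    (n : ℕ) : quadraticChar F ((α : F) ^ n) = (-1) ^ n := by
  have hk : 0 < k := by have := orderOf_pos α; omega
  rw [map_pow, quadraticChar_neg_one_iff_not_isSquare.2]
  rw [FiniteField.isSquare_iff (ringChar_ne_two_of_card_mod_four (by omega)) (Units.ne_zero α),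
    hcard, ← Units.val_pow_eq_pow_val, Units.val_eq_one]
  exact pow_ne_one_of_lt_orderOf (by omega) (by omega)

lemma cyc4_zero_union_cyc4_two (hcard : Fintype.card F = 4 * k + 1) (hα : orderOf α = 4 * k) :
    cyc4 α k 0 ∪ cyc4 α k 2 = quadResidues F := by
  ext x
  rcases eq_or_ne x 0 with rfl | hx
  · simp [zero_notMem_cyc4, quadResidues]
  obtain ⟨n, rfl⟩ := exists_pow_eq hcard hα hx
  simp only [mem_union, mem_cyc4_pow hα (by norm_num : 0 < 4),
    mem_cyc4_pow hα (by norm_num : 2 < 4), quadResidues, mem_filter, mem_univ, true_and,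
    quadraticChar_coe_pow hcard hα,
    neg_one_pow_eq_one_iff_even (by norm_num : (-1 : ℤ) ≠ 1), Nat.even_iff]
  omega

lemma cyc4_one_union_cyc4_three (hcard : Fintype.card F = 4 * k + 1) (hα : orderOf α = 4 * k) :
    cyc4 α k 1 ∪ cyc4 α k 3 = quadNonresidues F := by
  ext x
  rcases eq_or_ne x 0 with rfl | hx
  · simp [zero_notMem_cyc4, quadNonresidues]
  obtain ⟨n, rfl⟩ := exists_pow_eq hcard hα hx
  simp only [mem_union, mem_cyc4_pow hα (by norm_num : 1 < 4),
    mem_cyc4_pow hα (by norm_num : 3 < 4), quadNonresidues, mem_filter, mem_univ, true_and,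
    quadraticChar_coe_pow hcard hα,
    neg_one_pow_eq_neg_one_iff_odd (by norm_num : (-1 : ℤ) ≠ 1), Nat.odd_iff]
  omega

end Cyclotomic

section Construction

variable {F : Type*} [Field F] [Fintype F] [DecidableEq F]

def constructionA (α : Fˣ) (k : ℕ) : Fin 3 → Finset (ZMod 2 × F) :=
  ![layers {0} {0}, layers (cyc4 α k 0) (cyc4 α k 2), layers (cyc4 α k 1 ∪ cyc4 α k 3) ∅]

variable {k : ℕ} {α : Fˣ}

lemma diffRep_constructionA_cross (hcard : Fintype.card F = 4 * k + 1) (hα : orderOf α = 4 * k)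
    (hk : Odd k) (ε : ZMod 2) (d : F) :
    diffRep (layers (cyc4 α k 0) (cyc4 α k 2)) (layers (quadNonresidues F) ∅) (ε, d) +
      diffRep (layers (quadNonresidues F) ∅) (layers (cyc4 α k 0) (cyc4 α k 2)) (ε, d) =
      diffRep (quadResidues F) (quadNonresidues F) d := by
  have hneg := quadraticChar_neg_one_of_card_mod_four (F := F) (by omega)
  rw [← cyc4_zero_union_cyc4_two hcard hα,
    diffRep_union_left (disjoint_cyc4 hα (by norm_num) (by norm_num) (by norm_num))]
  rcases ZMod.two_cases ε with rfl | rfl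
  · simp only [diffRep_layers_zero, diffRep_empty_left, diffRep_empty_right, add_zero]
    rw [diffRep_neg_swap (A := quadNonresidues F), neg_cyc4_zero hα hk, neg_quadNonresidues hneg]
  · simp only [diffRep_layers_one, diffRep_empty_left, diffRep_empty_right, zero_add, add_zero]
    rw [diffRep_neg_swap (A := quadNonresidues F), ← neg_neg (cyc4 α k 0), neg_cyc4_zero hα hk,
      neg_quadNonresidues hneg, add_comm]

lemma count_wtotal_constructionA (hcard : Fintype.card F = 4 * k + 1) (hα : orderOf α = 4 * k)
    (hk : Odd k) (ε : ZMod 2) (d : F) :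
    (wtotal (constructionA α k) (2 * k)).count (ε, d) = if d = 0 then 0 else 2 * k + 1 := by
  have h02 : Disjoint (cyc4 α k 0) (cyc4 α k 2 : Finset F) :=
    disjoint_cyc4 hα (by norm_num) (by norm_num) (by norm_num)
  have h13 : Disjoint (cyc4 α k 1) (cyc4 α k 3 : Finset F) :=
    disjoint_cyc4 hα (by norm_num) (by norm_num) (by norm_num)
  rw [constructionA, cyc4_one_union_cyc4_three hcard hα, count_wtotal_three hk.pos]
  · rw [diffRep_layers_self_left h02, diffRep_layers_self_left (disjoint_empty_right _),
      diffRep_layers_self_right h02, diffRep_layers_self_right (disjoint_empty_right _),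
      union_empty, cyc4_zero_union_cyc4_two hcard hα, diffRep_zero_left_quadResidues_add,
      diffRep_zero_right_quadResidues_add, diffRep_constructionA_cross hcard hα hk]
    split_ifs with hd
    · simp [hd, diffRep_zero_of_disjoint disjoint_quadResidues_quadNonresidues]
    · have := four_mul_diffRep_quadResidues_quadNonresidues (F := F) (by omega) hd
      omega
  · rw [card_layers, card_singleton]
  · rw [card_layers, card_cyc4 hα, card_cyc4 hα, two_mul]
  · rw [card_layers, card_empty, add_zero, ← cyc4_one_union_cyc4_three hcard hα,
      card_union_of_disjoint h13, card_cyc4 hα, card_cyc4 hα, two_mul]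

end Construction

lemma natCeil_bswedf_bound {k : ℕ} (hk : 0 < k) :
    2 * k + 1 = ⌈((2 * k) * (4 * k + 2) * 2 : ℚ) / (2 * (4 * k + 1) - 1)⌉₊ := by
  have hk' : (1 : ℚ) ≤ k := by exact_mod_cast hk
  rw [eq_comm, Nat.ceil_eq_iff (by omega), lt_div_iff₀ (by linarith), div_le_iff₀ (by linarith)]
  push_cast
  constructor <;> nlinarith

/-- Construction A gives an optimal `(2q, 3, (2,2k,2k), 4k+2, 2k+1)`-BSWEDF. -/
theorem stmt11 {F : Type*} [Field F] [Fintype F] [DecidableEq F]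
    (k : ℕ) (hk : Odd k) (hcard : Fintype.card F = 4 * k + 1)
    (α : Fˣ) (hα : orderOf α = 4 * k)
    (S : Fin 3 → Finset (ZMod 2 × F))
    (hS1 : S 0 = {((0 : ZMod 2), (0 : F)), ((1 : ZMod 2), (0 : F))})
    (hS2 : S 1 = (cyc4 α k 0).image (fun x => ((0 : ZMod 2), x)) ∪
                  (cyc4 α k 2).image (fun x => ((1 : ZMod 2), x)))
    (hS3 : S 2 = (cyc4 α k 1).image (fun x => ((0 : ZMod 2), x)) ∪
                  (cyc4 α k 3).image (fun x => ((0 : ZMod 2), x))) :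
    (∀ δ : ZMod 2 × F, δ ≠ 0 →
      Multiset.count δ (wtotal S (2 * k)) ≤ 2 * k + 1) ∧
    (∃ δ : ZMod 2 × F, δ ≠ 0 ∧
      Multiset.count δ (wtotal S (2 * k)) = 2 * k + 1) ∧
    2 * k + 1 = ⌈((2 * k) * (4 * k + 2) * 2 : ℚ) / (2 * (4 * k + 1) - 1)⌉₊ := by
  have h0 : S 0 = layers {0} {0} := by
    rw [hS1, layers, image_singleton, image_singleton, insert_eq]
  have h2 : S 2 = layers (cyc4 α k 1 ∪ cyc4 α k 3) ∅ := by
    rw [hS3, layers, image_union, image_empty, union_empty]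
  have hS : S = constructionA α k := by
    funext i
    fin_cases i
    exacts [h0, hS2, h2]
  subst hS
  refine ⟨fun ⟨ε, d⟩ _ => ?_, ⟨(0, α), ?_, ?_⟩, natCeil_bswedf_bound hk.pos⟩
  · rw [count_wtotal_constructionA hcard hα hk]
    split_ifs <;> omega
  · simp
  · rw [count_wtotal_constructionA hcard hα hk, if_neg (Units.ne_zero α)]
end

section
/- Let q = 4k+1 be a prime power with k odd, and D^2_0, D^2_1 the cyclotomic classes of index 2 in F_q. In Z_3 × F_q define U_1 = {(1,0)}, U_2 = {(2,0)}, U_3 = {0}×D^2_0, U_4 = {0}×D^2_1. Then {U_1,U_2,U_3,U_4} is an optimal (3q, 4, (1,1,2k,2k), 4k+2, 2k+1)-BSWEDF: every nonzero element of Z_3 × F_q appears at most 2k+1 times in ⋃_{i≠j} D(U_i, Ũ_j), and 2k+1 = ⌈k̃·a·(m−1)/(n−1)⌉ with k̃ = 2k, a = 4k+2, m = 4, n = 3q. -/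
set_option linter.unusedSectionVars false
set_option maxHeartbeats 1000000

/-- The cyclotomic class of index 2: `D^2_i = {α^{i+2j} : 0 ≤ j ≤ 2k-1}`. -/
def cyc2 {F : Type*} [Field F] [DecidableEq F] (α : Fˣ) (k i : ℕ) : Finset F :=
  (Finset.range (2 * k)).image fun j => (α : F) ^ (i + 2 * j)

section MS
variable {G : Type*} [AddCommGroup G] [DecidableEq G]

lemma count_extDiff (X Y : Multiset G) (δ : G) :
    (extDiff X Y).count δ = (X.map fun x => Y.count (x - δ)).sum := by
  simp only [extDiff, Multiset.count_bind]
  congr 1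
  apply Multiset.map_congr rfl
  intro x _
  have hinj : Function.Injective (fun y : G => x - y) := fun a b h => by
    simpa using sub_right_injective h
  have := Multiset.count_map_eq_count' _ Y hinj (x - δ)
  simpa [sub_sub_cancel] using this

lemma count_extDiff_nsmul_s13 (X Y : Multiset G) (n : ℕ) (δ : G) :
    (extDiff X (n • Y)).count δ = n * (extDiff X Y).count δ := by
  rw [count_extDiff, count_extDiff]
  simp only [Multiset.count_nsmul]
  exact Multiset.sum_map_mul_left

lemma card_extDiff (X Y : Multiset G) :
    Multiset.card (extDiff X Y) = Multiset.card X * Multiset.card Y := by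
  simp [extDiff, Multiset.card_bind, Function.comp_def, Multiset.map_const', mul_comm]

lemma sum_count_univ [Fintype G] (M : Multiset G) :
    ∑ b : G, M.count b = Multiset.card M := by
  rw [← Multiset.toFinset_sum_count_eq M]
  exact (Finset.sum_subset (Finset.subset_univ _) (fun x _ hx => by
    simp [Multiset.count_eq_zero_of_notMem (by simpa using hx)])).symm

lemma finset_count {γ : Type*} [DecidableEq γ] (S : Finset γ) (x : γ) :
    S.val.count x = if x ∈ S then 1 else 0 := by
  split_ifs with h
  · exact Multiset.count_eq_one_of_mem S.nodup h
  · exact Multiset.count_eq_zero_of_notMem (by simpa using h)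

lemma extDiff_singleton_left (x : G) (Y : Multiset G) :
    extDiff ({x} : Multiset G) Y = Y.map (fun y => x - y) := by
  simp [extDiff]

lemma extDiff_singleton_right (X : Multiset G) (y : G) :
    extDiff X ({y} : Multiset G) = X.map (fun x => x - y) := by
  simp only [extDiff, Multiset.map_singleton]
  induction X using Multiset.induction with
  | empty => simp
  | cons a s ih => simp [ih]

lemma extDiff_singleton_singleton (x y : G) :
    extDiff ({x} : Multiset G) ({y} : Multiset G) = {x - y} := by
  simp [extDiff]

end MS

section MK
variable {A B : Type*} [AddCommGroup A] [AddCommGroup B] [DecidableEq A] [DecidableEq B]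

lemma count_map_mk (c0 : A) (m : Multiset B) (c : A) (d : B) :
    ((m.map (Prod.mk c0)).count (c, d)) = if c = c0 then m.count d else 0 := by
  split_ifs with h
  · subst h
    exact Multiset.count_map_eq_count' _ m (fun a b hab => by
      simpa [Prod.ext_iff] using hab) d
  · refine Multiset.count_eq_zero_of_notMem ?_
    simp only [Multiset.mem_map, Prod.mk.injEq, not_exists, not_and]
    rintro x _ h1 _; exact h h1.symm

lemma extDiff_map_mk (c c' : A) (m m' : Multiset B) :
    extDiff (m.map (Prod.mk c)) (m'.map (Prod.mk c')) =
      (extDiff m m').map (Prod.mk (c - c')) := by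
  simp only [extDiff, Multiset.bind_map, Multiset.map_bind, Multiset.map_map]
  rfl

end MK

section Field
variable {F : Type*} [Field F] [Fintype F] [DecidableEq F]
variable {k : ℕ} {α : Fˣ}

lemma exists_pow (hcard : Fintype.card F = 4 * k + 1) (hα : orderOf α = 4 * k)
    (u : Fˣ) : ∃ n : ℕ, α ^ n = u := by
  have hcu : Fintype.card Fˣ = 4 * k := by
    rw [Fintype.card_units, hcard]; omega
  have htop : Subgroup.zpowers α = ⊤ := by
    apply Subgroup.eq_top_of_card_eq
    rw [Nat.card_zpowers, hα, Nat.card_eq_fintype_card, hcu]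
  have : u ∈ Subgroup.zpowers α := htop ▸ Subgroup.mem_top u
  rw [← mem_powers_iff_mem_zpowers] at this
  exact this

lemma chi_alpha (hcard : Fintype.card F = 4 * k + 1) (hα : orderOf α = 4 * k)
    (hk : k ≠ 0) : quadraticChar F (α : F) = -1 := by
  rw [quadraticChar_neg_one_iff_not_isSquare]
  rintro ⟨y, hy⟩
  have hy0 : y ≠ 0 := by
    rintro rfl; exact (α.ne_zero) (by simpa using hy)
  have hu : α = Units.mk0 y hy0 * Units.mk0 y hy0 := Units.ext (by simpa using hy)
  have hcu : Fintype.card Fˣ = 4 * k := by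
    rw [Fintype.card_units, hcard]; omega
  have h1 : α ^ (2 * k) = 1 := by
    rw [hu, ← sq, ← pow_mul]
    have h24 : 2 * (2 * k) = 4 * k := by ring
    rw [h24, ← hcu]
    exact pow_card_eq_one
  have := orderOf_dvd_of_pow_eq_one h1
  rw [hα] at this
  have := Nat.le_of_dvd (by omega) this
  omega

lemma mem_cyc2_iff (hcard : Fintype.card F = 4 * k + 1) (hα : orderOf α = 4 * k)
    (hk : k ≠ 0) (i : ℕ) (hi : i ≤ 1) (x : F) :
    x ∈ cyc2 α k i ↔ quadraticChar F x = (-1) ^ i := by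
  have hχα := chi_alpha hcard hα hk
  constructor
  · rintro hx
    obtain ⟨j, hj, rfl⟩ := Finset.mem_image.mp hx
    rw [map_pow, hχα, pow_add, pow_mul, neg_one_sq, one_pow, mul_one]
  · intro hχ
    have hx0 : x ≠ 0 := by
      intro h
      rw [h, quadraticChar_zero] at hχ
      interval_cases i <;> norm_num at hχ
    obtain ⟨n, hn⟩ := exists_pow hcard hα (Units.mk0 x hx0)
    have hxn : x = (α : F) ^ n := by
      have := congrArg (Units.val) hn
      simpa using this.symm
    have hχn : ((-1 : ℤ)) ^ n = (-1) ^ i := by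
      rw [hxn, map_pow, hχα] at hχ; exact hχ
    have hk2 : 0 < 2 * k := by omega
    have horder : orderOf ((α : F)) = 4 * k := by rw [orderOf_units, hα]
    have hne : (-1 : ℤ) ≠ 1 := by norm_num
    have hpar : n % 2 = i % 2 := by
      have heq : Even n ↔ Even i := by
        constructor
        · intro h
          have h1 : ((-1 : ℤ)) ^ n = 1 := h.neg_one_pow
          rw [h1] at hχn
          exact (neg_one_pow_eq_one_iff_even hne).mp hχn.symm
        · intro h
          have h1 : ((-1 : ℤ)) ^ i = 1 := h.neg_one_pow
          rw [h1] at hχn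
          exact (neg_one_pow_eq_one_iff_even hne).mp hχn
      rw [Nat.even_iff, Nat.even_iff] at heq
      omega
    refine Finset.mem_image.mpr ⟨(n / 2) % (2 * k), Finset.mem_range.mpr (Nat.mod_lt _ hk2), ?_⟩
    have key : (α : F) ^ (i + 2 * ((n / 2) % (2 * k))) = (α : F) ^ (i + 2 * (n / 2)) := by
      rw [pow_add, pow_add]
      congr 1
      rw [pow_mul, pow_mul]
      have ho2 : orderOf ((α : F) ^ 2) = 2 * k := by
        rw [orderOf_pow_of_dvd (by norm_num) (by rw [horder]; omega), horder]
        omega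
      rw [← ho2]
      exact pow_mod_orderOf _ _
    rw [key, hxn]
    congr 1
    omega

lemma card_cyc2 (hα : orderOf α = 4 * k) (i : ℕ) (hi : i ≤ 1) :
    (cyc2 α k i).card = 2 * k := by
  rw [cyc2, Finset.card_image_of_injOn, Finset.card_range]
  intro j1 h1 j2 h2 h
  simp only [Finset.coe_range, Set.mem_Iio] at h1 h2
  have horder : orderOf ((α : F)) = 4 * k := by rw [orderOf_units, hα]
  have := pow_injOn_Iio_orderOf (x := (α : F))
    (by simp [horder]; omega : i + 2 * j1 ∈ Set.Iio (orderOf (α:F)))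
    (by simp [horder]; omega : i + 2 * j2 ∈ Set.Iio (orderOf (α:F))) h
  omega

lemma notMem_zero (hcard : Fintype.card F = 4 * k + 1) (hα : orderOf α = 4 * k)
    (hk : k ≠ 0) (i : ℕ) (hi : i ≤ 1) : (0 : F) ∉ cyc2 α k i := by
  intro h
  rw [mem_cyc2_iff hcard hα hk i hi, quadraticChar_zero] at h
  interval_cases i <;> norm_num at h

lemma chi_inv {c : F} (hc : c ≠ 0) :
    quadraticChar F c⁻¹ = quadraticChar F c := by
  have h1 : quadraticChar F c * quadraticChar F c⁻¹ = 1 := by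
    rw [← map_mul, mul_inv_cancel₀ hc, map_one]
  rcases quadraticChar_dichotomy hc with h | h <;> rw [h] at h1 ⊢ <;> omega

lemma image_mul_cyc2 (hcard : Fintype.card F = 4 * k + 1) (hα : orderOf α = 4 * k)
    (hk : k ≠ 0) {c : F} (hc : c ≠ 0) (i i' : ℕ) (hi : i ≤ 1) (hi' : i' ≤ 1)
    (hχ : quadraticChar F c = (-1) ^ (i + i')) :
    (cyc2 α k i).image (fun x => c * x) = cyc2 α k i' := by
  ext x
  simp only [Finset.mem_image]
  rw [mem_cyc2_iff hcard hα hk i' hi' x]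
  constructor
  · rintro ⟨y, hy, rfl⟩
    rw [mem_cyc2_iff hcard hα hk i hi y] at hy
    rw [map_mul, hy, hχ, ← pow_add]
    have : i + i' + i = i' + 2 * i := by ring
    rw [this, pow_add, pow_mul, neg_one_sq, one_pow, mul_one]
  · intro hx
    have hx0 : x ≠ 0 := by
      intro h; rw [h, quadraticChar_zero] at hx
      interval_cases i' <;> norm_num at hx
    refine ⟨c⁻¹ * x, ?_, by field_simp⟩
    rw [mem_cyc2_iff hcard hα hk i hi, map_mul, chi_inv hc, hχ, hx, ← pow_add]
    have : i + i' + i' = i + 2 * i' := by ring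
    rw [this, pow_add, pow_mul, neg_one_sq, one_pow, mul_one]

lemma extDiff_map_mul (c : F) (X Y : Multiset F) :
    extDiff (X.map (c * ·)) (Y.map (c * ·)) = (extDiff X Y).map (c * ·) := by
  simp only [extDiff, Multiset.bind_map, Multiset.map_bind, Multiset.map_map]
  congr 1
  funext x
  simp [Function.comp, mul_sub]

lemma count_extDiff_scale {c : F} (hc : c ≠ 0) (b : F) (X Y : Finset F) :
    (extDiff ((X.image (c * ·)).val) ((Y.image (c * ·)).val)).count (c * b)
      = (extDiff X.val Y.val).count b := by
  have hinj : Function.Injective (c * ·) := mul_right_injective₀ hc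
  rw [Finset.image_val_of_injOn (hinj.injOn), Finset.image_val_of_injOn (hinj.injOn),
    extDiff_map_mul]
  exact Multiset.count_map_eq_count' _ _ hinj b

lemma count_zero_extDiff (hcard : Fintype.card F = 4 * k + 1) (hα : orderOf α = 4 * k)
    (hk : k ≠ 0) {i i' : ℕ} (hi : i ≤ 1) (hi' : i' ≤ 1) (hne : i ≠ i') :
    (extDiff (cyc2 α k i).val (cyc2 α k i').val).count 0 = 0 := by
  rw [Multiset.count_eq_zero]
  intro hmem
  rw [extDiff, Multiset.mem_bind] at hmem
  obtain ⟨x, hx, hmem2⟩ := hmem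
  rw [Multiset.mem_map] at hmem2
  obtain ⟨y, hy, hxy⟩ := hmem2
  have hxy' : x = y := by linear_combination hxy
  rw [← Finset.mem_def] at hx hy
  rw [mem_cyc2_iff hcard hα hk i hi] at hx
  rw [mem_cyc2_iff hcard hα hk i' hi'] at hy
  rw [hxy', hy] at hx
  interval_cases i <;> interval_cases i' <;> omega

lemma key_count (hcard : Fintype.card F = 4 * k + 1) (hα : orderOf α = 4 * k)
    (hk : k ≠ 0) (b : F) (hb : b ≠ 0) :
    (extDiff (cyc2 α k 0).val (cyc2 α k 1).val).count b
      + (extDiff (cyc2 α k 1).val (cyc2 α k 0).val).count b = 2 * k := by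
  set A := cyc2 α k 0 with hA
  set B := cyc2 α k 1 with hB
  set N : F → ℕ := fun b =>
    (extDiff A.val B.val).count b + (extDiff B.val A.val).count b with hN
  have hscale : ∀ c : F, c ≠ 0 → ∀ d : F, N (c * d) = N d := by
    intro c hc d
    rcases quadraticChar_dichotomy hc with h | h
    · have hAA : A.image (c * ·) = A :=
        image_mul_cyc2 hcard hα hk hc 0 0 (by norm_num) (by norm_num) (by simpa using h)
      have hBB : B.image (c * ·) = B :=
        image_mul_cyc2 hcard hα hk hc 1 1 (by norm_num) (by norm_num) (by simpa using h)
      have h1 := count_extDiff_scale hc d A B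
      have h2 := count_extDiff_scale hc d B A
      rw [hAA, hBB] at h1
      rw [hAA, hBB] at h2
      simp only [hN]
      omega
    · have hAB : A.image (c * ·) = B :=
        image_mul_cyc2 hcard hα hk hc 0 1 (by norm_num) (by norm_num) (by simpa using h)
      have hBA : B.image (c * ·) = A :=
        image_mul_cyc2 hcard hα hk hc 1 0 (by norm_num) (by norm_num) (by simpa using h)
      have h1 := count_extDiff_scale hc d A B
      have h2 := count_extDiff_scale hc d B A
      rw [hAB, hBA] at h1
      rw [hAB, hBA] at h2
      simp only [hN]
      omega
  have hcards : Multiset.card A.val = 2 * k ∧ Multiset.card B.val = 2 * k := by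
    constructor
    · exact card_cyc2 hα 0 (by norm_num)
    · exact card_cyc2 hα 1 (by norm_num)
  have hsum : ∑ c : F, N c = 8 * k * k := by
    simp only [hN]
    rw [Finset.sum_add_distrib, sum_count_univ, sum_count_univ, card_extDiff, card_extDiff,
      hcards.1, hcards.2]
    ring
  have hN0 : N 0 = 0 := by
    simp only [hN]
    rw [count_zero_extDiff hcard hα hk (by norm_num) (by norm_num) (by norm_num),
      count_zero_extDiff hcard hα hk (by norm_num) (by norm_num) (by norm_num)]
  have hconst : ∀ c ∈ Finset.univ.erase (0 : F), N c = N b := by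
    intro c hc
    have hc0 : c ≠ 0 := (Finset.mem_erase.mp hc).1
    have : c = (c * b⁻¹) * b := by field_simp
    rw [this, hscale (c * b⁻¹) (by simp [hc0, hb]) b]
  have herase : ∑ c ∈ Finset.univ.erase (0 : F), N c = 8 * k * k := by
    have h := Finset.sum_erase_add Finset.univ N (Finset.mem_univ (0 : F))
    rw [hN0, add_zero] at h
    rw [h, hsum]
  have hcardsE : (Finset.univ.erase (0 : F)).card = 4 * k := by
    rw [Finset.card_erase_of_mem (Finset.mem_univ _), Finset.card_univ, hcard]
    omega
  rw [Finset.sum_congr rfl hconst, Finset.sum_const, hcardsE, smul_eq_mul] at herase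
  have h4 : 4 * k * N b = 4 * k * (2 * k) := by rw [herase]; ring
  have := Nat.eq_of_mul_eq_mul_left (by omega : 0 < 4 * k) h4
  simpa [hN] using this

end Field

section Count3
variable {F : Type*} [Field F] [Fintype F] [DecidableEq F]

lemma count_single_map (c0 : ZMod 3) (S : Finset F) (a : ZMod 3) (b : F) :
    (extDiff ({((c0 : ZMod 3), (0:F))} : Finset (ZMod 3 × F)).val
      ((S.image fun x => ((0 : ZMod 3), x)).val)).count (a, b)
      = if a = c0 ∧ -b ∈ S then 1 else 0 := by
  have hinj : Function.Injective (fun x : F => ((0 : ZMod 3), x)) :=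
    fun x y h => congrArg Prod.snd h
  rw [Finset.singleton_val, Finset.image_val_of_injOn hinj.injOn, extDiff_singleton_left,
    Multiset.map_map]
  have hcomp : ((fun y => ((c0, (0:F)) - y)) ∘ (fun x : F => ((0 : ZMod 3), x)))
      = fun x : F => ((c0 : ZMod 3), -x) := by
    funext x
    simp [Prod.ext_iff]
  rw [hcomp]
  have hsplit : S.val.map (fun x : F => ((c0 : ZMod 3), -x))
      = (S.val.map Neg.neg).map (Prod.mk c0) := by
    rw [Multiset.map_map]; rfl
  rw [hsplit, count_map_mk]
  have hneg : (S.val.map Neg.neg).count b = S.val.count (-b) := by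
    have := Multiset.count_map_eq_count' Neg.neg S.val neg_injective (-b)
    simpa using this
  by_cases ha : a = c0
  · rw [if_pos ha, hneg, finset_count]
    simp [ha]
  · simp [ha]

lemma count_map_single (c0 : ZMod 3) (S : Finset F) (a : ZMod 3) (b : F) :
    (extDiff ((S.image fun x => ((0 : ZMod 3), x)).val)
      ({((c0 : ZMod 3), (0:F))} : Finset (ZMod 3 × F)).val).count (a, b)
      = if a = -c0 ∧ b ∈ S then 1 else 0 := by
  have hinj : Function.Injective (fun x : F => ((0 : ZMod 3), x)) :=
    fun x y h => congrArg Prod.snd h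
  rw [Finset.singleton_val, Finset.image_val_of_injOn hinj.injOn, extDiff_singleton_right,
    Multiset.map_map]
  have hcomp : ((fun p : ZMod 3 × F => p - (c0, (0:F))) ∘ (fun x : F => ((0 : ZMod 3), x)))
      = Prod.mk (-c0) := by
    funext x
    simp [Prod.ext_iff]
  rw [hcomp, count_map_mk, finset_count]
  by_cases ha : a = -c0 <;> simp [ha]

lemma count_map_map (S T : Finset F) (a : ZMod 3) (b : F) :
    (extDiff ((S.image fun x => ((0 : ZMod 3), x)).val)
      ((T.image fun x => ((0 : ZMod 3), x)).val)).count (a, b)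
      = if a = 0 then (extDiff S.val T.val).count b else 0 := by
  have hinj : Function.Injective (fun x : F => ((0 : ZMod 3), x)) :=
    fun x y h => congrArg Prod.snd h
  rw [Finset.image_val_of_injOn hinj.injOn, Finset.image_val_of_injOn hinj.injOn]
  have : (Multiset.map (fun x : F => ((0 : ZMod 3), x)) S.val) = S.val.map (Prod.mk 0) := rfl
  rw [this, (rfl : (Multiset.map (fun x : F => ((0 : ZMod 3), x)) T.val) = T.val.map (Prod.mk 0)),
    extDiff_map_mk, sub_zero, count_map_mk]

lemma count_single_single (x y δ : ZMod 3 × F) :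
    (extDiff ({x} : Finset (ZMod 3 × F)).val ({y} : Finset (ZMod 3 × F)).val).count δ
      = if δ = x - y then 1 else 0 := by
  rw [Finset.singleton_val, Finset.singleton_val, extDiff_singleton_singleton,
    Multiset.count_singleton]

end Count3

/-- Construction C gives an optimal `(3q, 4, (1,1,2k,2k), 4k+2, 2k+1)`-BSWEDF. -/
theorem stmt13 {F : Type*} [Field F] [Fintype F] [DecidableEq F]
    (k : ℕ) (hk : Odd k) (hcard : Fintype.card F = 4 * k + 1)
    (α : Fˣ) (hα : orderOf α = 4 * k)
    (U : Fin 4 → Finset (ZMod 3 × F))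
    (hU1 : U 0 = {((1 : ZMod 3), (0 : F))})
    (hU2 : U 1 = {((2 : ZMod 3), (0 : F))})
    (hU3 : U 2 = (cyc2 α k 0).image (fun x => ((0 : ZMod 3), x)))
    (hU4 : U 3 = (cyc2 α k 1).image (fun x => ((0 : ZMod 3), x))) :
    (∀ δ : ZMod 3 × F, δ ≠ 0 →
      Multiset.count δ (wtotal U (2 * k)) ≤ 2 * k + 1) ∧
    2 * k + 1 = ⌈((2 * k) * (4 * k + 2) * 3 : ℚ) / (3 * (4 * k + 1) - 1)⌉₊ := by
  have hk0 : k ≠ 0 := by rcases hk with ⟨m, hm⟩; omega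
  have hk1 : 1 ≤ k := Nat.one_le_iff_ne_zero.mpr hk0
  constructor
  · intro δ hδ
    obtain ⟨a, b⟩ := δ
    have hcA : (cyc2 α k 0).card = 2 * k := card_cyc2 hα 0 (by norm_num)
    have hcB : (cyc2 α k 1).card = 2 * k := card_cyc2 hα 1 (by norm_num)
    have hinj : Function.Injective (fun x : F => ((0 : ZMod 3), x)) :=
      fun x y h => congrArg Prod.snd h
    have hw0 : 2 * k / (U 0).card = 2 * k := by rw [hU1, Finset.card_singleton, Nat.div_one]
    have hw1 : 2 * k / (U 1).card = 2 * k := by rw [hU2, Finset.card_singleton, Nat.div_one]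
    have hw2 : 2 * k / (U 2).card = 1 := by
      rw [hU3, Finset.card_image_of_injective _ hinj, hcA, Nat.div_self (by omega)]
    have hw3 : 2 * k / (U 3).card = 1 := by
      rw [hU4, Finset.card_image_of_injective _ hinj, hcB, Nat.div_self (by omega)]
    rw [wtotal, Multiset.count_sum']
    have hsub1 : ((1:ZMod 3),(0:F)) - (2,0) = ((2:ZMod 3),(0:F)) := by
      simp [Prod.ext_iff]; decide
    have hsub2 : ((2:ZMod 3),(0:F)) - (1,0) = ((1:ZMod 3),(0:F)) := by
      simp [Prod.ext_iff]; decide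
    simp only [Multiset.count_sum', Fin.sum_univ_four, ne_eq, Fin.reduceEq, not_false_eq_true,
      not_true, if_true, if_false, ite_true, ite_false, Multiset.count_add, Multiset.count_zero,
      hw0, hw1, hw2, hw3, count_extDiff_nsmul_s13, one_mul]
    rw [hU1, hU2, hU3, hU4]
    simp only [count_single_single, count_single_map, count_map_single, count_map_map,
      hsub1, hsub2]
    have hdichot : ∀ x : F, x ≠ 0 →
        (x ∈ cyc2 α k 0 ∧ x ∉ cyc2 α k 1) ∨ (x ∈ cyc2 α k 1 ∧ x ∉ cyc2 α k 0) := by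
      intro x hx
      rcases quadraticChar_dichotomy hx with h | h
      · refine Or.inl ⟨?_, ?_⟩
        · rw [mem_cyc2_iff hcard hα hk0 0 (by norm_num)]; simpa using h
        · rw [mem_cyc2_iff hcard hα hk0 1 (by norm_num)]; simp [h]
      · refine Or.inr ⟨?_, ?_⟩
        · rw [mem_cyc2_iff hcard hα hk0 1 (by norm_num)]; simpa using h
        · rw [mem_cyc2_iff hcard hα hk0 0 (by norm_num)]; simp [h]
    have hz0 : (0:F) ∉ cyc2 α k 0 := notMem_zero hcard hα hk0 0 (by norm_num)
    have hz1 : (0:F) ∉ cyc2 α k 1 := notMem_zero hcard hα hk0 1 (by norm_num)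
    have e1 : (-1 : ZMod 3) = 2 := by decide
    have e2 : (-2 : ZMod 3) = 1 := by decide
    rw [e1, e2]
    have ha3 := (by decide : ∀ x : ZMod 3, x = 0 ∨ x = 1 ∨ x = 2) a
    have s01 : (0 : ZMod 3) ≠ 1 := by decide
    have s02 : (0 : ZMod 3) ≠ 2 := by decide
    have s12 : (1 : ZMod 3) ≠ 2 := by decide
    have s10 : (1 : ZMod 3) ≠ 0 := by decide
    have s20 : (2 : ZMod 3) ≠ 0 := by decide
    have s21 : (2 : ZMod 3) ≠ 1 := by decide
    rcases ha3 with rfl | rfl | rfl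
    · -- a = 0
      have hb : b ≠ 0 := by
        intro h; exact hδ (by simp [h, Prod.ext_iff])
      have hkey := key_count hcard hα hk0 b hb
      simp only [Prod.mk.injEq, s01, s02, false_and, if_false, eq_self_iff_true, true_and,
        if_true, ite_true, mul_zero, add_zero, zero_add, mul_ite, mul_one]
      omega
    · -- a = 1
      by_cases hb : b = 0
      · subst hb
        simp [Prod.ext_iff, s12, s10, hz0, hz1]
      · have hd := hdichot b hb
        have hnd := hdichot (-b) (neg_ne_zero.mpr hb)
        have hbne : ((1 : ZMod 3), b) ≠ ((1 : ZMod 3), (0:F)) := by simp [Prod.ext_iff, hb]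
        rcases hd with ⟨h1, h2⟩ | ⟨h1, h2⟩ <;> rcases hnd with ⟨h3, h4⟩ | ⟨h3, h4⟩ <;>
          simp [Prod.ext_iff, s12, s10, hb, h1, h2, h3, h4] <;> omega
    · -- a = 2
      by_cases hb : b = 0
      · subst hb
        simp [Prod.ext_iff, s21, s20, hz0, hz1]
      · have hd := hdichot b hb
        have hnd := hdichot (-b) (neg_ne_zero.mpr hb)
        have hbne : ((2 : ZMod 3), b) ≠ ((2 : ZMod 3), (0:F)) := by simp [Prod.ext_iff, hb]
        rcases hd with ⟨h1, h2⟩ | ⟨h1, h2⟩ <;> rcases hnd with ⟨h3, h4⟩ | ⟨h3, h4⟩ <;>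
          simp [Prod.ext_iff, s21, s20, hb, h1, h2, h3, h4] <;> omega
  · symm
    rw [Nat.ceil_eq_iff (by omega)]
    have hk1Q : (1:ℚ) ≤ (k : ℚ) := by exact_mod_cast hk1
    have hden : (0:ℚ) < 3 * (4 * (k:ℚ) + 1) - 1 := by nlinarith
    constructor
    · have h2 : 2 * k + 1 - 1 = 2 * k := by omega
      rw [h2, lt_div_iff₀ hden]
      push_cast
      nlinarith
    · rw [div_le_iff₀ hden]
      push_cast
      nlinarith
end
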